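/- Every quotient group of a finite CI-group with respect to graphs is a CI-group with respect to graphs. That is, if G is a finite group such that for all inverse-closed subsets S, S' ⊆ G, Cay(G,S) ≅ Cay(G,S') implies α(S) = S' for some α ∈ Aut(G), and H is a normal subgroup of G, then G/H has the same property for inverse-closed subsets of G/H. -/

import Mathlib

open Equiv

/-!
Write `π : G → G ⧸ H`. A Cayley isomorphism `e : Cay(G ⧸ H, A) ≅ Cay(G ⧸ H, B)` lifts, fibre by
fibre, to a Cayley isomorphism `Cay(G, π⁻¹ A) ≅ Cay(G, π⁻¹ B)`, so the CI property of `G` gives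
`σ ∈ Aut G` with `σ (π⁻¹ A) = π⁻¹ B`. If the left stabilizer of `A` is trivial, then `H` is the
stabilizer of `π⁻¹ A`, so `σ H` is the stabilizer of `π⁻¹ B`, which contains `H`; comparing
orders, `σ H = H`, and `σ` descends to an automorphism of `G ⧸ H` mapping `A` to `B`.

To reach that case, replace `S` by `S ∪ {1}` or, passing to complementary graphs, by `Sᶜ ∪ {1}`:
for symmetric `S` these two sets cannot both have nontrivial stabilizers, since nontrivial
`k`, `u` stabilizing them would give `k ∈ S`, `u ∉ S`, then `u k ∈ S`, and finally
`u⁻¹ = k (u k)⁻¹ ∈ S`.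
-/

section

variable {G : Type*} [Group G]

def IsCayleyIso (e : Perm G) (S S' : Set G) : Prop :=
  ∀ a b : G, a⁻¹ * b ∈ S ↔ (e a)⁻¹ * e b ∈ S'

variable (G) in
def IsCIGroup : Prop :=
  ∀ S S' : Set G, S⁻¹ = S → S'⁻¹ = S' → (∃ e : Perm G, IsCayleyIso e S S') →
    ∃ α : G ≃* G, α '' S = S'

open MulAction Pointwise

namespace IsCayleyIso

variable {e : Perm G} {S S' : Set G}

theorem one_mem_iff (he : IsCayleyIso e S S') : (1 : G) ∈ S ↔ 1 ∈ S' := by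
  simpa using he 1 1

theorem compl (he : IsCayleyIso e S S') : IsCayleyIso e Sᶜ S'ᶜ :=
  fun a b => not_congr (he a b)

theorem insert_one (he : IsCayleyIso e S S') : IsCayleyIso e (insert 1 S) (insert 1 S') :=
  fun a b => by simp only [Set.mem_insert_iff, inv_mul_eq_one, e.injective.eq_iff, he a b]

end IsCayleyIso

theorem Set.inv_insert_one_of_inv_eq {S : Set G} (hS : S⁻¹ = S) :
    (insert 1 S)⁻¹ = insert 1 S := by
  rw [Set.inv_insert, inv_one, hS]

theorem Set.inv_compl_of_inv_eq {S : Set G} (hS : S⁻¹ = S) : Sᶜ⁻¹ = Sᶜ := by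
  rw [Set.compl_inv, hS]

theorem Set.inv_preimage_of_inv_eq {G' : Type*} [Group G'] (f : G →* G') {A : Set G'}
    (hA : A⁻¹ = A) : (f ⁻¹' A)⁻¹ = f ⁻¹' A := by
  ext x
  rw [Set.mem_inv, Set.mem_preimage, Set.mem_preimage, map_inv, ← Set.mem_inv, hA]

theorem MulEquiv.image_eq_of_image_insert_one {α : G ≃* G} {S S' : Set G}
    (h1 : (1 : G) ∈ S ↔ 1 ∈ S') (h : α '' insert 1 S = insert 1 S') : α '' S = S' := by
  by_cases h1S : (1 : G) ∈ S
  · rwa [Set.insert_eq_of_mem h1S, Set.insert_eq_of_mem (h1.1 h1S)] at h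
  · rw [← Set.insert_sdiff_self_of_notMem h1S, ← Set.insert_sdiff_self_of_notMem (h1S ∘ h1.2),
      Set.image_sdiff α.injective, h, Set.image_singleton, map_one]

theorem mul_mem_iff_of_mem_stabilizer {k : G} {T : Set G} (hk : k ∈ stabilizer G T) (x : G) :
    k * x ∈ T ↔ x ∈ T := by
  rw [mem_stabilizer_iff] at hk
  conv_lhs => rw [← hk]
  exact Set.smul_mem_smul_set_iff

theorem stabilizer_insert_one_eq_bot_or {S : Set G} (hS : S⁻¹ = S) :
    stabilizer G (insert 1 S) = ⊥ ∨ stabilizer G (insert 1 Sᶜ) = ⊥ := by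
  refine or_iff_not_imp_left.2 fun hne => (Subgroup.bot_or_exists_ne_one _).resolve_right ?_
  obtain ⟨k, hk, hk1⟩ := (Subgroup.bot_or_exists_ne_one _).resolve_left hne
  rintro ⟨u, hu, hu1⟩
  have hkS : k ∈ S := by simpa [hk1] using (mul_mem_iff_of_mem_stabilizer hk 1).2 (.inl rfl)
  have huS : u ∉ S := by simpa [hu1] using (mul_mem_iff_of_mem_stabilizer hu 1).2 (.inl rfl)
  have hukS : u * k ∈ S := by
    by_contra h
    have hk' : k ∈ insert 1 Sᶜ := (mul_mem_iff_of_mem_stabilizer hu k).1 (.inr h)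
    exact hk'.elim hk1 (· hkS)
  have hu' : u⁻¹ ∈ insert 1 S := by
    have := (mul_mem_iff_of_mem_stabilizer hk (u * k)⁻¹).2 (.inr (by rwa [← Set.mem_inv, hS]))
    rwa [mul_inv_rev, mul_inv_cancel_left] at this
  rcases hu' with h | h
  · exact hu1 (inv_eq_one.1 h)
  · exact huS (by rw [← hS, Set.mem_inv]; exact h)

theorem MonoidHom.stabilizer_preimage_of_surjective {G' : Type*} [Group G'] {f : G →* G'}
    (hf : Function.Surjective f) (A : Set G') :
    stabilizer G (f ⁻¹' A) = (stabilizer G' A).comap f := by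
  ext g
  simp only [Subgroup.mem_comap, mem_stabilizer_iff, Set.ext_iff,
    Set.mem_smul_set_iff_inv_smul_mem, Set.mem_preimage, smul_eq_mul, map_mul, map_inv, hf.forall]

theorem MulEquiv.stabilizer_image {G' : Type*} [Group G'] (σ : G ≃* G') (X : Set G) :
    stabilizer G' (σ '' X) = (stabilizer G X).map (σ : G →* G') := by
  ext g
  rw [← MulEquiv.toMonoidHom_eq_coe, Subgroup.mem_map_equiv, mem_stabilizer_iff,
    mem_stabilizer_iff, ← (Set.image_injective.2 σ.injective).eq_iff, Set.image_smul_distrib,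
    MulEquiv.apply_symm_apply]

namespace QuotientGroup

variable (H : Subgroup G) [H.Normal]

noncomputable def liftPerm (e : Perm (G ⧸ H)) : Perm G :=
  Subgroup.groupEquivQuotientProdSubgroup.symm.permCongr (e.prodCongr (Equiv.refl H))

theorem mk_liftPerm (e : Perm (G ⧸ H)) (g : G) : mk' H (liftPerm H e g) = e (mk' H g) := by
  have mk_symm (p : (G ⧸ H) × H) :
      mk' H ((Subgroup.groupEquivQuotientProdSubgroup (s := H)).symm p) = p.1 := by
    obtain ⟨x, rfl⟩ := Subgroup.groupEquivQuotientProdSubgroup.surjective p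
    rw [Equiv.symm_apply_apply]
    rfl
  exact mk_symm _

variable {H}

theorem _root_.IsCayleyIso.preimage_mk {e : Perm (G ⧸ H)} {A B : Set (G ⧸ H)}
    (he : IsCayleyIso e A B) :
    IsCayleyIso (liftPerm H e) (mk' H ⁻¹' A) (mk' H ⁻¹' B) := fun a b => by
  simpa only [Set.mem_preimage, map_mul, map_inv, mk_liftPerm] using he (mk' H a) (mk' H b)

theorem map_eq_self_of_image_preimage_eq [Finite G] {A B : Set (G ⧸ H)}
    (hA : stabilizer (G ⧸ H) A = ⊥) {σ : G ≃* G}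
    (hσ : σ '' (mk' H ⁻¹' A) = mk' H ⁻¹' B) : H.map (σ : G →* G) = H := by
  have hstab (C : Set (G ⧸ H)) :
      stabilizer G (mk' H ⁻¹' C) = (stabilizer (G ⧸ H) C).comap (mk' H) :=
    (mk' H).stabilizer_preimage_of_surjective (mk'_surjective H) C
  have hle : H ≤ H.map (σ : G →* G) := calc
    H = (⊥ : Subgroup (G ⧸ H)).comap (mk' H) := by rw [MonoidHom.comap_bot, ker_mk']
    _ ≤ stabilizer G (mk' H ⁻¹' B) := hstab B ▸ Subgroup.comap_mono bot_le
    _ = H.map (σ : G →* G) := by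
      rw [← hσ, σ.stabilizer_image, hstab, hA, MonoidHom.comap_bot, ker_mk']
  exact (Subgroup.eq_of_le_of_card_ge hle (Subgroup.card_map_of_injective σ.injective).le).symm

theorem _root_.IsCIGroup.exists_image_eq_of_stabilizer_eq_bot [Finite G] (hG : IsCIGroup G)
    {A B : Set (G ⧸ H)} (hA : A⁻¹ = A) (hB : B⁻¹ = B) (hstab : stabilizer (G ⧸ H) A = ⊥)
    {e : Perm (G ⧸ H)} (he : IsCayleyIso e A B) :
    ∃ α : (G ⧸ H) ≃* (G ⧸ H), α '' A = B := by
  obtain ⟨σ, hσ⟩ := hG _ _ (Set.inv_preimage_of_inv_eq (mk' H) hA)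
    (Set.inv_preimage_of_inv_eq (mk' H) hB) ⟨liftPerm H e, he.preimage_mk⟩
  have hmap := map_eq_self_of_image_preimage_eq hstab hσ
  refine ⟨congr H H σ hmap, ?_⟩
  rw [← Set.image_preimage_eq A (mk'_surjective H), ← Set.image_preimage_eq B (mk'_surjective H),
    ← hσ, Set.image_image, Set.image_image]
  exact Set.image_congr fun x _ => congr_mk H H σ hmap x

end QuotientGroup

theorem IsCIGroup.quotient [Finite G] (hG : IsCIGroup G) (H : Subgroup G) [H.Normal] :
    IsCIGroup (G ⧸ H) := by
  rintro S S' hS hS' ⟨e, he⟩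
  rcases stabilizer_insert_one_eq_bot_or hS with hstab | hstab
  · obtain ⟨α, hα⟩ := hG.exists_image_eq_of_stabilizer_eq_bot (Set.inv_insert_one_of_inv_eq hS)
      (Set.inv_insert_one_of_inv_eq hS') hstab he.insert_one
    exact ⟨α, α.image_eq_of_image_insert_one he.one_mem_iff hα⟩
  · obtain ⟨α, hα⟩ := hG.exists_image_eq_of_stabilizer_eq_bot
      (Set.inv_insert_one_of_inv_eq (Set.inv_compl_of_inv_eq hS))
      (Set.inv_insert_one_of_inv_eq (Set.inv_compl_of_inv_eq hS')) hstab he.compl.insert_one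
    refine ⟨α, ?_⟩
    rw [← compl_compl S, Set.image_compl_eq α.bijective,
      α.image_eq_of_image_insert_one he.compl.one_mem_iff hα, compl_compl]

end

/-- A quotient of a finite CI-group with respect to graphs (inverse-closed connection
sets) is a CI-group with respect to graphs. -/
theorem stmt_7 {G : Type*} [Group G] [Fintype G]
    (hCI : ∀ S S' : Set G, S⁻¹ = S → S'⁻¹ = S' →
      (∃ e : Perm G, ∀ a b : G, a⁻¹ * b ∈ S ↔ (e a)⁻¹ * (e b) ∈ S') →
      ∃ α : G ≃* G, α '' S = S')
    (H : Subgroup G) [H.Normal] :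
    ∀ S S' : Set (G ⧸ H), S⁻¹ = S → S'⁻¹ = S' →
      (∃ e : Perm (G ⧸ H), ∀ a b : G ⧸ H, a⁻¹ * b ∈ S ↔ (e a)⁻¹ * (e b) ∈ S') →
      ∃ α : (G ⧸ H) ≃* (G ⧸ H), α '' S = S' :=
  IsCIGroup.quotient hCI H
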